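/- arXiv:0707.3986 — 2 statements merged into one kernel-verified Lean document; each statement's English description precedes it below -/
import Mathlib

section
/- Let p : D → ℝ satisfy p(x) > 0 for all x ∈ D. Then there exists a unique family of functions (Q_A)_{A ⊆ S}, Q_A : D → ℝ, such that each Q_A depends only on the coordinates in A, Q_A(x) = 0 whenever x_i = r_i for some i ∈ A, and log(p(x)/p(r)) = Σ_{A ⊆ S} Q_A(x) for every x ∈ D. -/
/-!
Write `f x = log (p x / p r)`. If `Q` is such a family, then at the grounded point `g_A x` every
`Q B` with `B ⊄ A` vanishes and every `Q B` with `B ⊆ A` takes its value at `x`, so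
`∑_{B ⊆ A} Q B x = f (g_A x)` for all `A`. These partial sums determine `Q` by strong induction,
and Möbius inversion on the Boolean lattice produces the solution
`Q A x = ∑_{B ⊆ A} (-1)^|A \ B| f (g_B x)`. It vanishes when `x i = r i` for some `i ∈ A`
because the terms for `B` and `insert i B` then cancel.
-/

open Finset

namespace Finset

variable {ι G : Type*} [DecidableEq ι] [AddCommGroup G]

def subsetMoebius (g : Finset ι → G) (A : Finset ι) : G :=
  ∑ B ∈ A.powerset, (-1 : ℤ) ^ #(A \ B) • g B

lemma sum_Icc_neg_one_pow_card_sdiff {C A : Finset ι} (hCA : C ⊆ A) :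
    ∑ B ∈ Icc C A, (-1 : ℤ) ^ #(B \ C) = if C = A then 1 else 0 := by
  have hshift : ∑ B ∈ Icc C A, (-1 : ℤ) ^ #(B \ C) = ∑ D ∈ (A \ C).powerset, (-1 : ℤ) ^ #D :=
    sum_nbij' (· \ C) (C ∪ ·) (by grind) (by grind) (by grind) (by grind) (fun _ _ => rfl)
  rw [hshift, sum_powerset_neg_one_pow_card]
  exact if_congr (sdiff_eq_empty_iff_subset.trans ⟨hCA.antisymm, fun h => h ▸ subset_refl _⟩)
    rfl rfl

lemma sum_powerset_subsetMoebius (g : Finset ι → G) (A : Finset ι) :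
    ∑ B ∈ A.powerset, subsetMoebius g B = g A := by
  calc ∑ B ∈ A.powerset, subsetMoebius g B
      = ∑ C ∈ A.powerset, ∑ B ∈ Icc C A, (-1 : ℤ) ^ #(B \ C) • g C :=
        sum_comm' (by grind)
    _ = ∑ C ∈ A.powerset, (if C = A then 1 else 0 : ℤ) • g C := by
        refine sum_congr rfl fun C hC => ?_
        rw [← sum_smul, sum_Icc_neg_one_pow_card_sdiff (mem_powerset.mp hC)]
    _ = g A := by simp

lemma subsetMoebius_eq_zero_of_forall_insert_eq {g : Finset ι → G} {A : Finset ι} {i : ι}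
    (hi : i ∈ A) (hg : ∀ B, g (insert i B) = g B) : subsetMoebius g A = 0 := by
  obtain ⟨A, hiA, rfl⟩ : ∃ A', i ∉ A' ∧ A = insert i A' :=
    ⟨A.erase i, notMem_erase i A, (insert_erase hi).symm⟩
  have hpair : ∀ B ∈ A.powerset, (-1 : ℤ) ^ #(insert i A \ insert i B) • g (insert i B)
      = -((-1 : ℤ) ^ #(insert i A \ B) • g B) := by
    intro B hB
    have hiB : i ∉ B := fun h => hiA (mem_powerset.mp hB h)
    rw [hg, insert_sdiff_insert, sdiff_insert_of_notMem hiA, insert_sdiff_of_notMem _ hiB,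
      card_insert_of_notMem (fun h => hiA (mem_sdiff.mp h).1), pow_succ, mul_neg_one, neg_smul,
      neg_neg]
  rw [subsetMoebius, sum_powerset_insert hiA, sum_congr rfl hpair, sum_neg_distrib, add_neg_cancel]

lemma eq_of_sum_powerset_eq {M : Type*} [AddCancelCommMonoid M] {Q Q' : Finset ι → M}
    (h : ∀ A : Finset ι, ∑ B ∈ A.powerset, Q B = ∑ B ∈ A.powerset, Q' B) : Q = Q' := by
  funext A
  induction A using strongInduction with
  | H A ih =>
    have hA := h A
    rw [← add_sum_erase _ _ (mem_powerset_self A), ← add_sum_erase _ _ (mem_powerset_self A),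
      sum_congr rfl fun B hB => ih B (ssubset_iff_subset_ne.mpr
        ⟨mem_powerset.mp (mem_of_mem_erase hB), ne_of_mem_erase hB⟩)] at hA
    exact add_right_cancel hA

end Finset

section Grounding

variable {ι : Type*} [DecidableEq ι] {D : ι → Type*} (r : ∀ i, D i)

def ground (A : Finset ι) (x : ∀ i, D i) : ∀ i, D i := fun i => if i ∈ A then x i else r i

variable {r}

lemma ground_apply_of_notMem {A : Finset ι} {i : ι} (x : ∀ i, D i) (hi : i ∉ A) :
    ground r A x i = r i :=
  if_neg hi

lemma ground_ground_of_subset {A B : Finset ι} (x : ∀ i, D i) (hBA : B ⊆ A) :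
    ground r B (ground r A x) = ground r B x := by
  funext i
  by_cases hi : i ∈ B
  · simp [ground, hi, hBA hi]
  · simp [ground, hi]

lemma ground_insert_of_eq {x : ∀ i, D i} {i : ι} (hi : x i = r i) (B : Finset ι) :
    ground r (insert i B) x = ground r B x := by
  funext j
  by_cases hj : j = i
  · subst hj; simp [ground, hi]
  · simp [ground, hj]

lemma ground_univ [Fintype ι] (x : ∀ i, D i) : ground r univ x = x := by
  funext i; simp [ground]

variable (r) [Fintype ι] {G : Type*} [AddCommGroup G]

def IsNormalizedPotential (f : (∀ i, D i) → G) (Q : Finset ι → (∀ i, D i) → G) : Prop :=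
  (∀ A x, Q A x = Q A (ground r A x)) ∧ (∀ A x, (∃ i ∈ A, x i = r i) → Q A x = 0) ∧
    ∀ x, f x = ∑ A, Q A x

def moebiusPotential (f : (∀ i, D i) → G) (A : Finset ι) (x : ∀ i, D i) : G :=
  subsetMoebius (fun B => f (ground r B x)) A

lemma isNormalizedPotential_moebiusPotential (f : (∀ i, D i) → G) :
    IsNormalizedPotential r f (moebiusPotential r f) := by
  refine ⟨fun A x => ?_, fun A x ⟨i, hiA, hxi⟩ => ?_, fun x => ?_⟩
  · exact sum_congr rfl fun B hB => by simp only [ground_ground_of_subset x (mem_powerset.mp hB)]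
  · exact subsetMoebius_eq_zero_of_forall_insert_eq hiA fun B => by rw [ground_insert_of_eq hxi]
  · conv_lhs => rw [← ground_univ (r := r) x]
    rw [← powerset_univ]
    exact (sum_powerset_subsetMoebius (fun B => f (ground r B x)) univ).symm

variable {r}

lemma IsNormalizedPotential.sum_powerset {f : (∀ i, D i) → G} {Q : Finset ι → (∀ i, D i) → G}
    (hQ : IsNormalizedPotential r f Q) (A : Finset ι) (x : ∀ i, D i) :
    ∑ B ∈ A.powerset, Q B x = f (ground r A x) := by
  obtain ⟨hdep, hzero, hsum⟩ := hQ
  rw [hsum, ← sum_subset (subset_univ A.powerset)]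
  · refine sum_congr rfl fun B hB => ?_
    rw [hdep B (ground r A x), ground_ground_of_subset x (mem_powerset.mp hB), ← hdep]
  · intro B _ hB
    obtain ⟨i, hiB, hiA⟩ := not_subset.mp (mt mem_powerset.mpr hB)
    exact hzero B _ ⟨i, hiB, ground_apply_of_notMem x hiA⟩

variable (r)

theorem existsUnique_isNormalizedPotential (f : (∀ i, D i) → G) :
    ∃! Q, IsNormalizedPotential r f Q := by
  refine ⟨moebiusPotential r f, isNormalizedPotential_moebiusPotential r f, fun Q hQ => ?_⟩
  refine eq_of_sum_powerset_eq fun A => funext fun x => ?_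
  rw [Finset.sum_apply, Finset.sum_apply, hQ.sum_powerset,
    (isNormalizedPotential_moebiusPotential r f).sum_powerset]

end Grounding

theorem hammersley_clifford_potentials_general
    {N : ℕ} (D : Fin N → Type*)
    (r : ∀ i, D i) (p : (∀ i, D i) → ℝ) :
    ∃! Q : Finset (Fin N) → ((∀ i, D i) → ℝ),
      (∀ (A : Finset (Fin N)) (x : ∀ i, D i),
          Q A x = Q A (fun i => if i ∈ A then x i else r i)) ∧
      (∀ (A : Finset (Fin N)) (x : ∀ i, D i),
          (∃ i ∈ A, x i = r i) → Q A x = 0) ∧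
      (∀ x : ∀ i, D i,
          Real.log (p x / p r) = ∑ A : Finset (Fin N), Q A x) :=
  existsUnique_isNormalizedPotential r fun x => Real.log (p x / p r)

/-- **Hammersley–Clifford theorem (existence and uniqueness of the potentials).**
For a strictly positive function `p : D → ℝ` there exists a unique family of
potentials `(Q A)` such that each `Q A` depends only on the coordinates in `A`,
`Q A x = 0` whenever some coordinate `x i` with `i ∈ A` equals `r i`, and
`log (p x / p r) = Σ_{A ⊆ S} Q A x` for every `x`. -/
theorem hammersley_clifford_potentials
    {N : ℕ} (hN : 0 < N) (D : Fin N → Type*) [∀ i, Nonempty (D i)]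
    (r : ∀ i, D i) (p : (∀ i, D i) → ℝ) (hp : ∀ x, 0 < p x) :
    ∃! Q : Finset (Fin N) → ((∀ i, D i) → ℝ),
      (∀ (A : Finset (Fin N)) (x : ∀ i, D i),
          Q A x = Q A (fun i => if i ∈ A then x i else r i)) ∧
      (∀ (A : Finset (Fin N)) (x : ∀ i, D i),
          (∃ i ∈ A, x i = r i) → Q A x = 0) ∧
      (∀ x : ∀ i, D i,
          Real.log (p x / p r) = ∑ A : Finset (Fin N), Q A x) :=
  hammersley_clifford_potentials_general D r p
end

section
/- Fix a site l ∈ S. Then the one-site normalization of p with respect to the mixed measure m_l satisfies ∫ p(x[l↦t]) dm_l(t) = p(x[l↦r_l]) · ( 1 + e^{h_l(x)} · c_l(x) / q(x[l↦r_l]) ) = p(x[l↦r_l]) / ρ_l(x), for every x ∈ D. -/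
/-!
Away from the reference point `r_l` the factorization of `p` reads
`p(x[l↦t]) = p(x[l↦r_l]) e^{h_l(x)} q(x[l↦t]) / q(x[l↦r_l])`, since `h_l` does not see the
`l`-th block. The Dirac part of `m_l` contributes `p(x[l↦r_l])`, and the Lebesgue part, which
does not charge the single point `r_l`, contributes `p(x[l↦r_l]) e^{h_l(x)} c_l(x) / q(x[l↦r_l])`.
-/

open MeasureTheory

open scoped Classical in
/-- The grounded indicator `1*_r : D → ℝ`: `0` at the reference value `r`
and `1` elsewhere. -/
noncomputable def groundedIndicator {D : Type*} (r x : D) : ℝ :=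
  if x = r then 0 else 1

lemma groundedIndicator_of_ne {D : Type*} {r x : D} (hx : x ≠ r) :
    groundedIndicator r x = 1 :=
  if_neg hx

lemma integral_dirac_add_measure {α E : Type*} [MeasurableSpace α] [MeasurableSingletonClass α]
    [NormedAddCommGroup E] [NormedSpace ℝ E] [CompleteSpace E] {μ : Measure α} {f : α → E}
    (hf : Integrable f μ) (a : α) : ∫ t, f t ∂(Measure.dirac a + μ) = f a + ∫ t, f t ∂μ := by
  rw [integral_add_measure (integrable_dirac enorm_lt_top) hf, integral_dirac]

lemma integral_dirac_add_eq_of_eq_const_mul {α : Type*} [MeasurableSpace α]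
    [MeasurableSingletonClass α] {μ : Measure α} [NullSingletonClass μ] {f g : α → ℝ} {a : α}
    {C : ℝ} (hg : Integrable g μ) (hfg : ∀ t, t ≠ a → f t = C * g t) :
    ∫ t, f t ∂(Measure.dirac a + μ) = f a + C * ∫ t, g t ∂μ := by
  have hae : f =ᵐ[μ] fun t ↦ C * g t := (μ.ae_ne a).mono hfg
  rw [integral_dirac_add_measure ((hg.const_mul C).congr hae.symm), integral_congr_ae hae,
    integral_const_mul]

theorem mixedStates_oneSite_normalization_general
    {N : ℕ} (n : Fin N → ℕ) (hn : ∀ i, 0 < n i)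
    (r : ∀ i, Fin (n i) → ℝ) (l : Fin N)
    (q : (∀ i, Fin (n i) → ℝ) → ℝ)
    (hqpos : ∀ x, 0 < q x)
    (h : (∀ i, Fin (n i) → ℝ) → ℝ)
    (hhl : ∀ (x : ∀ i, Fin (n i) → ℝ) (t : Fin (n l) → ℝ),
        h (Function.update x l t) = h x)
    (p : (∀ i, Fin (n i) → ℝ) → ℝ)
    (hpq : ∀ x : ∀ i, Fin (n i) → ℝ,
        p x = p (Function.update x l (r l)) *
          Real.exp (groundedIndicator (r l) (x l) * h x) *
          q x / q (Function.update x l (r l)))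
    (hqint : ∀ x : ∀ i, Fin (n i) → ℝ,
        Integrable (fun t : Fin (n l) → ℝ => q (Function.update x l t)))
    (ρ : (∀ i, Fin (n i) → ℝ) → ℝ)
    (hρ : ∀ x : ∀ i, Fin (n i) → ℝ,
        ρ x = 1 / (1 + Real.exp (h x) *
          (∫ t : Fin (n l) → ℝ, q (Function.update x l t)) /
          q (Function.update x l (r l)))) :
    ∀ x : ∀ i, Fin (n i) → ℝ,
      (∫ t : Fin (n l) → ℝ, p (Function.update x l t)
          ∂(Measure.dirac (r l) + volume)) =
        p (Function.update x l (r l)) *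
          (1 + Real.exp (h x) *
            (∫ t : Fin (n l) → ℝ, q (Function.update x l t)) /
            q (Function.update x l (r l))) ∧
      (∫ t : Fin (n l) → ℝ, p (Function.update x l t)
          ∂(Measure.dirac (r l) + volume)) =
        p (Function.update x l (r l)) / ρ x := by
  intro x
  have : Nonempty (Fin (n l)) := Fin.pos_iff_nonempty.mp (hn l)
  have hp_off : ∀ t, t ≠ r l → p (Function.update x l t) =
      p (Function.update x l (r l)) * Real.exp (h x) / q (Function.update x l (r l)) *
        q (Function.update x l t) := by
    intro t ht
    rw [hpq, Function.update_idem, hhl, Function.update_self, groundedIndicator_of_ne ht,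
      one_mul]
    ring
  have hnorm := integral_dirac_add_eq_of_eq_const_mul (hqint x) hp_off
  have hq_ne : q (Function.update x l (r l)) ≠ 0 := (hqpos _).ne'
  refine ⟨by rw [hnorm]; field_simp, ?_⟩
  rw [hnorm, hρ, one_div, div_inv_eq_mul]
  field_simp

/-- **One-site normalization w.r.t. the mixed measure `m_l = δ_{r_l} + λ_l`.**
With `D = Π_{i∈S} ℝ^{n_i}`, `q : D → (0,∞)` measurable, `h_l` measurable and
independent of the `l`-th block, and `p : D → (0,∞)` satisfying
`p x = p (x[l↦r_l]) · exp(1*_{r_l}(x_l)·h_l x) · q x / q (x[l↦r_l])`,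
with `c_l x = ∫ q(x[l↦t]) dλ_l(t)` finite and positive, one has for all `x`:
`∫ p(x[l↦t]) dm_l(t) = p(x[l↦r_l]) · (1 + e^{h_l x} · c_l x / q(x[l↦r_l]))
 = p(x[l↦r_l]) / ρ_l x`,
where `ρ_l x = 1 / (1 + e^{h_l x} · c_l x / q(x[l↦r_l]))`. -/
theorem mixedStates_oneSite_normalization
    {N : ℕ} (hN : 0 < N) (n : Fin N → ℕ) (hn : ∀ i, 0 < n i)
    (r : ∀ i, Fin (n i) → ℝ) (l : Fin N)
    (q : (∀ i, Fin (n i) → ℝ) → ℝ) (hqmeas : Measurable q)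
    (hqpos : ∀ x, 0 < q x)
    (h : (∀ i, Fin (n i) → ℝ) → ℝ) (hhmeas : Measurable h)
    (hhl : ∀ (x : ∀ i, Fin (n i) → ℝ) (t : Fin (n l) → ℝ),
        h (Function.update x l t) = h x)
    (p : (∀ i, Fin (n i) → ℝ) → ℝ) (hpmeas : Measurable p)
    (hppos : ∀ x, 0 < p x)
    (hpq : ∀ x : ∀ i, Fin (n i) → ℝ,
        p x = p (Function.update x l (r l)) *
          Real.exp (groundedIndicator (r l) (x l) * h x) *
          q x / q (Function.update x l (r l)))
    (hqint : ∀ x : ∀ i, Fin (n i) → ℝ,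
        Integrable (fun t : Fin (n l) → ℝ => q (Function.update x l t)))
    (hcpos : ∀ x : ∀ i, Fin (n i) → ℝ,
        0 < ∫ t : Fin (n l) → ℝ, q (Function.update x l t))
    (ρ : (∀ i, Fin (n i) → ℝ) → ℝ)
    (hρ : ∀ x : ∀ i, Fin (n i) → ℝ,
        ρ x = 1 / (1 + Real.exp (h x) *
          (∫ t : Fin (n l) → ℝ, q (Function.update x l t)) /
          q (Function.update x l (r l)))) :
    ∀ x : ∀ i, Fin (n i) → ℝ,
      (∫ t : Fin (n l) → ℝ, p (Function.update x l t)
          ∂(Measure.dirac (r l) + volume)) =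
        p (Function.update x l (r l)) *
          (1 + Real.exp (h x) *
            (∫ t : Fin (n l) → ℝ, q (Function.update x l t)) /
            q (Function.update x l (r l))) ∧
      (∫ t : Fin (n l) → ℝ, p (Function.update x l t)
          ∂(Measure.dirac (r l) + volume)) =
        p (Function.update x l (r l)) / ρ x :=
  mixedStates_oneSite_normalization_general n hn r l q hqpos h hhl p hpq hqint ρ hρ
end
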